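/- arXiv:math/0508573 — 2 statements merged into one kernel-verified Lean document; each statement's English description precedes it below -/
import Mathlib

section
/- Let R be the quotient of the free associative ℂ-algebra ℂ⟨e1,e2,e3⟩ by the two-sided ideal generated by e1e2 + e2e1 − e3, e1e3 + e3e1, and e2e3 + e3e2 (the universal enveloping algebra of the color analogue of the Heisenberg Lie algebra). Then the images in R of the ordered monomials e1^{a} e2^{b} e3^{c}, for (a,b,c) ranging over ℕ³, form a basis of R as a ℂ-vector space. -/
open FreeAlgebra

inductive HRel : FreeAlgebra ℂ (Fin 3) → FreeAlgebra ℂ (Fin 3) → Prop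
  | r12 : HRel (ι ℂ 0 * ι ℂ 1 + ι ℂ 1 * ι ℂ 0) (ι ℂ 2)
  | r13 : HRel (ι ℂ 0 * ι ℂ 2 + ι ℂ 2 * ι ℂ 0) 0
  | r23 : HRel (ι ℂ 1 * ι ℂ 2 + ι ℂ 2 * ι ℂ 1) 0

noncomputable def e (i : Fin 3) : RingQuot HRel :=
  RingQuot.mkAlgHom ℂ HRel (ι ℂ i)

namespace ColorH

lemma skew_pow_left {R : Type*} [Ring R] {x y : R} (h : x * y = -(y * x)) (n : ℕ) :
    x ^ n * y = ((-1) ^ n : ℤ) • (y * x ^ n) := by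
  induction n with
  | zero => simp
  | succ n ih =>
    rw [pow_succ, mul_assoc, h, mul_neg, ← mul_assoc, ih]
    simp [pow_succ, smul_smul, mul_assoc]

lemma skew_pow_right {R : Type*} [Ring R] {x y : R} (h : x * y = -(y * x)) (n : ℕ) :
    x * y ^ n = ((-1) ^ n : ℤ) • (y ^ n * x) := by
  have h' : y * x = -(x * y) := by rw [h, neg_neg]
  rw [skew_pow_left h' n, smul_smul, ← pow_add, Even.neg_one_pow ⟨n, rfl⟩, one_smul]

lemma rel12 : e 0 * e 1 + e 1 * e 0 = e 2 := by
  simpa [e, map_add, map_mul] using RingQuot.mkAlgHom_rel ℂ HRel.r12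

lemma rel13 : e 0 * e 2 + e 2 * e 0 = 0 := by
  simpa [e, map_add, map_mul] using RingQuot.mkAlgHom_rel ℂ HRel.r13

lemma rel23 : e 1 * e 2 + e 2 * e 1 = 0 := by
  simpa [e, map_add, map_mul] using RingQuot.mkAlgHom_rel ℂ HRel.r23

lemma e10 : e 1 * e 0 = e 2 - e 0 * e 1 := eq_sub_of_add_eq' rel12

lemma e20 : e 2 * e 0 = -(e 0 * e 2) := eq_neg_of_add_eq_zero_left (by rw [add_comm]; exact rel13)

lemma e21 : e 2 * e 1 = -(e 1 * e 2) := eq_neg_of_add_eq_zero_left (by rw [add_comm]; exact rel23)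

lemma e2pow0 (c : ℕ) : e 2 ^ c * e 0 = ((-1) ^ c : ℤ) • (e 0 * e 2 ^ c) :=
  skew_pow_left e20 c

lemma e2pow1 (c : ℕ) : e 2 ^ c * e 1 = ((-1) ^ c : ℤ) • (e 1 * e 2 ^ c) :=
  skew_pow_left e21 c

lemma e2_e1pow (k : ℕ) : e 2 * e 1 ^ k = ((-1) ^ k : ℤ) • (e 1 ^ k * e 2) :=
  skew_pow_right e21 k

lemma e21' : e 2 * e 1 = (-1 : ℤ) • (e 1 * e 2) := by rw [e21, neg_smul, one_smul]

lemma e1pow0 (b : ℕ) : e 1 ^ (b + 1) * e 0 =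
    ((-1) ^ (b + 1) : ℤ) • (e 0 * e 1 ^ (b + 1)) + ((b : ℤ) + 1) • (e 1 ^ b * e 2) := by
  induction b with
  | zero =>
    simp only [zero_add, pow_one, pow_zero, one_mul, Nat.cast_zero, e10]
    module
  | succ b ih =>
    have step1 : e 1 ^ (b + 1 + 1) * e 0 = e 1 ^ (b + 1) * e 2 - (e 1 ^ (b + 1) * e 0) * e 1 := by
      rw [pow_succ, mul_assoc, e10, mul_sub, mul_assoc]
    rw [step1, ih]
    simp only [add_mul, smul_mul_assoc, mul_assoc, e21', mul_smul_comm, smul_smul, pow_succ]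
    push_cast
    module
abbrev M := (ℕ × ℕ × ℕ) →₀ ℂ

noncomputable def E0 : M →ₗ[ℂ] M :=
  Finsupp.lsum ℂ fun p => Finsupp.lsingle (p.1 + 1, p.2.1, p.2.2)

noncomputable def E1 : M →ₗ[ℂ] M :=
  Finsupp.lsum ℂ fun p =>
    ((-1 : ℂ) ^ p.1) • Finsupp.lsingle (p.1, p.2.1 + 1, p.2.2) +
    ((-1 : ℂ) ^ (p.1 + p.2.1 + 1) * p.1) • Finsupp.lsingle (p.1 - 1, p.2.1, p.2.2 + 1)

noncomputable def E2 : M →ₗ[ℂ] M :=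
  Finsupp.lsum ℂ fun p => ((-1 : ℂ) ^ (p.1 + p.2.1)) • Finsupp.lsingle (p.1, p.2.1, p.2.2 + 1)

lemma E0_single (a b c : ℕ) (x : ℂ) :
    E0 (Finsupp.single (a, b, c) x) = Finsupp.single (a + 1, b, c) x := by
  simp [E0]

lemma E1_single (a b c : ℕ) (x : ℂ) :
    E1 (Finsupp.single (a, b, c) x) =
      (-1 : ℂ) ^ a • Finsupp.single (a, b + 1, c) x +
      ((-1 : ℂ) ^ (a + b + 1) * a) • Finsupp.single (a - 1, b, c + 1) x := by
  simp [E1]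

lemma E2_single (a b c : ℕ) (x : ℂ) :
    E2 (Finsupp.single (a, b, c) x) = (-1 : ℂ) ^ (a + b) • Finsupp.single (a, b, c + 1) x := by
  simp [E2]

noncomputable def EE : Fin 3 → Module.End ℂ M := ![E0, E1, E2]

lemma relE12 : E0 * E1 + E1 * E0 = E2 := by
  apply Finsupp.lhom_ext
  rintro ⟨a, b, c⟩ x
  cases a with
  | zero =>
    simp only [LinearMap.add_apply, Module.End.mul_apply, LinearMap.zero_apply, E0_single,
      E1_single, E2_single, map_add, map_smul, Nat.zero_sub, Nat.add_sub_cancel,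
      Nat.succ_sub_one, smul_smul]
    push_cast
    module
  | succ a =>
    simp only [LinearMap.add_apply, Module.End.mul_apply, LinearMap.zero_apply, E0_single,
      E1_single, E2_single, map_add, map_smul, Nat.zero_sub, Nat.add_sub_cancel,
      Nat.succ_sub_one, smul_smul]
    push_cast
    module

lemma relE13 : E0 * E2 + E2 * E0 = 0 := by
  apply Finsupp.lhom_ext
  rintro ⟨a, b, c⟩ x
  cases a with
  | zero =>
    simp only [LinearMap.add_apply, Module.End.mul_apply, LinearMap.zero_apply, E0_single,
      E1_single, E2_single, map_add, map_smul, Nat.zero_sub, Nat.add_sub_cancel,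
      Nat.succ_sub_one, smul_smul]
    push_cast
    module
  | succ a =>
    simp only [LinearMap.add_apply, Module.End.mul_apply, LinearMap.zero_apply, E0_single,
      E1_single, E2_single, map_add, map_smul, Nat.zero_sub, Nat.add_sub_cancel,
      Nat.succ_sub_one, smul_smul]
    push_cast
    module

lemma relE23 : E1 * E2 + E2 * E1 = 0 := by
  apply Finsupp.lhom_ext
  rintro ⟨a, b, c⟩ x
  cases a with
  | zero =>
    simp only [LinearMap.add_apply, Module.End.mul_apply, LinearMap.zero_apply, E0_single,
      E1_single, E2_single, map_add, map_smul, Nat.zero_sub, Nat.add_sub_cancel,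
      Nat.succ_sub_one, smul_smul]
    push_cast
    module
  | succ a =>
    simp only [LinearMap.add_apply, Module.End.mul_apply, LinearMap.zero_apply, E0_single,
      E1_single, E2_single, map_add, map_smul, Nat.zero_sub, Nat.add_sub_cancel,
      Nat.succ_sub_one, smul_smul]
    push_cast
    module
noncomputable def φ : FreeAlgebra ℂ (Fin 3) →ₐ[ℂ] Module.End ℂ M :=
  FreeAlgebra.lift ℂ EE

lemma φ_rel : ∀ ⦃x y : FreeAlgebra ℂ (Fin 3)⦄, HRel x y → φ x = φ y := by
  rintro x y (h | h | h) <;>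
    simp only [φ, map_add, map_mul, map_zero, FreeAlgebra.lift_ι_apply, EE,
      Matrix.cons_val_zero, Matrix.cons_val_one, Matrix.head_cons, Matrix.cons_val_two,
      Matrix.tail_cons]
  · exact relE12
  · exact relE13
  · exact relE23

noncomputable def ψ : RingQuot HRel →ₐ[ℂ] Module.End ℂ M :=
  RingQuot.liftAlgHom ℂ ⟨φ, φ_rel⟩

lemma ψ_e (i : Fin 3) : ψ (e i) = EE i := by
  rw [e, ψ, RingQuot.liftAlgHom_mkAlgHom_apply, φ, FreeAlgebra.lift_ι_apply]

noncomputable def v (p : ℕ × ℕ × ℕ) : M := Finsupp.single p 1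

lemma E0_pow (a : ℕ) (q : ℕ × ℕ × ℕ) : (E0 ^ a) (v q) = v (q.1 + a, q.2.1, q.2.2) := by
  induction a generalizing q with
  | zero => simp [v]
  | succ a ih =>
    have h0 : E0 (v q) = v (q.1 + 1, q.2.1, q.2.2) := E0_single q.1 q.2.1 q.2.2 1
    rw [pow_succ, Module.End.mul_apply, h0, ih]
    have : q.1 + 1 + a = q.1 + (a + 1) := by omega
    rw [this]

lemma E1_pow (b c : ℕ) : (E1 ^ b) (v (0, 0, c)) = v (0, b, c) := by
  induction b with
  | zero => simp [v]
  | succ b ih =>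
    rw [pow_succ', Module.End.mul_apply, ih]
    show E1 (Finsupp.single _ 1) = Finsupp.single _ 1
    rw [E1_single]
    simp

lemma E2_pow (c : ℕ) : (E2 ^ c) (v (0, 0, 0)) = v (0, 0, c) := by
  induction c with
  | zero => simp [v]
  | succ c ih =>
    rw [pow_succ', Module.End.mul_apply, ih]
    show E2 (Finsupp.single _ 1) = Finsupp.single _ 1
    rw [E2_single]
    simp

noncomputable def mon (p : ℕ × ℕ × ℕ) : RingQuot HRel :=
  e 0 ^ p.1 * e 1 ^ p.2.1 * e 2 ^ p.2.2

lemma ψ_mon (p : ℕ × ℕ × ℕ) : ψ (mon p) (v (0, 0, 0)) = v p := by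
  obtain ⟨a, b, c⟩ := p
  rw [mon, map_mul, map_mul, map_pow, map_pow, map_pow, ψ_e, ψ_e, ψ_e]
  show (EE 0 ^ a) ((EE 1 ^ b) ((EE 2 ^ c) (v (0,0,0)))) = _
  rw [show EE 0 = E0 from rfl, show EE 1 = E1 from rfl, show EE 2 = E2 from rfl,
    E2_pow, E1_pow, E0_pow]
  simp

lemma mon_li : LinearIndependent ℂ mon := by
  apply LinearIndependent.of_comp ((LinearMap.applyₗ (v (0, 0, 0))).comp ψ.toLinearMap)
  have : (⇑((LinearMap.applyₗ (v (0,0,0))).comp ψ.toLinearMap) ∘ mon) = v := by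
    funext p
    simpa using ψ_mon p
  rw [this]
  have hb : v = ⇑(Finsupp.basisSingleOne (R := ℂ) (ι := ℕ × ℕ × ℕ)) := by
    funext p; simp [v]
  rw [hb]
  exact Finsupp.basisSingleOne.linearIndependent
noncomputable def S : Submodule ℂ (RingQuot HRel) := Submodule.span ℂ (Set.range mon)

lemma mon_mk (a b c : ℕ) : mon (a, b, c) = e 0 ^ a * e 1 ^ b * e 2 ^ c := rfl

lemma mon_mem (p : ℕ × ℕ × ℕ) : mon p ∈ S := Submodule.subset_span ⟨p, rfl⟩

lemma zsmul_mem {x : RingQuot HRel} (z : ℤ) (h : x ∈ S) : z • x ∈ S := by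
  rw [← Int.cast_smul_eq_zsmul ℂ]; exact S.smul_mem _ h

lemma mon_mul_e2 (a b c : ℕ) : mon (a, b, c) * e 2 = mon (a, b, c + 1) := by
  simp [mon_mk, pow_succ, mul_assoc]

lemma mon_mul_e1 (a b c : ℕ) :
    mon (a, b, c) * e 1 = ((-1) ^ c : ℤ) • mon (a, b + 1, c) := by
  rw [mon_mk, mon_mk, mul_assoc, e2pow1, mul_smul_comm]
  congr 1
  rw [pow_succ]
  noncomm_ring

lemma mon_mul_e0_zero (a c : ℕ) :
    mon (a, 0, c) * e 0 = ((-1) ^ c : ℤ) • mon (a + 1, 0, c) := by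
  rw [mon_mk, mon_mk, mul_assoc, e2pow0, mul_smul_comm]
  congr 1
  rw [pow_succ]
  noncomm_ring

lemma mon_mul_e0_succ (a b c : ℕ) :
    mon (a, b + 1, c) * e 0 = ((-1) ^ (b + 1 + c) : ℤ) • mon (a + 1, b + 1, c) +
      (((-1) ^ c * ((b : ℤ) + 1)) : ℤ) • mon (a, b, c + 1) := by
  rw [mon_mk, mon_mk, mon_mk, mul_assoc _ (e 2 ^ c) (e 0), e2pow0, mul_smul_comm,
    mul_assoc (e 0 ^ a) (e 1 ^ (b + 1)) (e 0 * e 2 ^ c),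
    ← mul_assoc (e 1 ^ (b + 1)) (e 0) (e 2 ^ c), e1pow0,
    pow_succ (e 0) a, pow_succ' (e 2) c]
  simp only [add_mul, smul_mul_assoc, mul_add, mul_smul_comm, smul_add, smul_smul, mul_assoc]
  push_cast
  module

lemma mul_e_mem {x : RingQuot HRel} (hx : x ∈ S) (i : Fin 3) : x * e i ∈ S := by
  induction hx using Submodule.span_induction with
  | mem y hy =>
    obtain ⟨⟨a, b, c⟩, rfl⟩ := hy
    fin_cases i
    · show mon (a, b, c) * e 0 ∈ S
      cases b with
      | zero => rw [mon_mul_e0_zero]; exact zsmul_mem _ (mon_mem _)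
      | succ b =>
        rw [mon_mul_e0_succ]
        exact S.add_mem (zsmul_mem _ (mon_mem _)) (zsmul_mem _ (mon_mem _))
    · show mon (a, b, c) * e 1 ∈ S
      rw [mon_mul_e1]; exact zsmul_mem _ (mon_mem _)
    · show mon (a, b, c) * e 2 ∈ S
      rw [mon_mul_e2]; exact mon_mem _
  | zero => simpa using S.zero_mem
  | add y z _ _ hy hz => rw [add_mul]; exact S.add_mem hy hz
  | smul a y _ hy => rw [smul_mul_assoc]; exact S.smul_mem a hy

lemma mul_epow_mem {x : RingQuot HRel} (hx : x ∈ S) (i : Fin 3) (n : ℕ) : x * e i ^ n ∈ S := by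
  induction n with
  | zero => simpa using hx
  | succ n ih => rw [pow_succ, ← mul_assoc]; exact mul_e_mem ih i

lemma mul_mon_mem {x : RingQuot HRel} (hx : x ∈ S) (q : ℕ × ℕ × ℕ) : x * mon q ∈ S := by
  rw [mon, ← mul_assoc, ← mul_assoc]
  exact mul_epow_mem (mul_epow_mem (mul_epow_mem hx 0 q.1) 1 q.2.1) 2 q.2.2

lemma S_mul_S {x y : RingQuot HRel} (hx : x ∈ S) (hy : y ∈ S) : x * y ∈ S := by
  induction hy using Submodule.span_induction with
  | mem y hy => obtain ⟨q, rfl⟩ := hy; exact mul_mon_mem hx q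
  | zero => simpa using S.zero_mem
  | add y z _ _ hy hz => rw [mul_add]; exact S.add_mem hy hz
  | smul a y _ hy => rw [mul_smul_comm]; exact S.smul_mem a hy

lemma one_mem_S : (1 : RingQuot HRel) ∈ S := by
  have : mon (0, 0, 0) = 1 := by rw [mon_mk]; simp
  rw [← this]; exact mon_mem _

lemma e_mem_S (i : Fin 3) : e i ∈ S := by
  fin_cases i
  · show e 0 ∈ S
    have h : mon (1, 0, 0) = e 0 := by rw [mon_mk]; simp
    rw [← h]; exact mon_mem _
  · show e 1 ∈ S
    have h : mon (0, 1, 0) = e 1 := by rw [mon_mk]; simp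
    rw [← h]; exact mon_mem _
  · show e 2 ∈ S
    have h : mon (0, 0, 1) = e 2 := by rw [mon_mk]; simp
    rw [← h]; exact mon_mem _

lemma S_top : S = ⊤ := by
  rw [eq_top_iff]
  rintro x -
  obtain ⟨z, rfl⟩ := RingQuot.mkAlgHom_surjective ℂ HRel x
  induction z using FreeAlgebra.induction with
  | grade0 r =>
    rw [AlgHom.commutes, Algebra.algebraMap_eq_smul_one]
    exact S.smul_mem r one_mem_S
  | grade1 i => exact e_mem_S i
  | mul a b ha hb => rw [map_mul]; exact S_mul_S ha hb
  | add a b ha hb => rw [map_add]; exact S.add_mem ha hb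

end ColorH

/-- The ordered monomials `e1^a e2^b e3^c`, `(a,b,c) ∈ ℕ³`, form a ℂ-basis of the
universal enveloping algebra of the color Heisenberg Lie algebra. -/
theorem colorHeisenberg_pbw_basis :
    ∃ b : Module.Basis (ℕ × ℕ × ℕ) ℂ (RingQuot HRel),
      ∀ p : ℕ × ℕ × ℕ, b p = e 0 ^ p.1 * e 1 ^ p.2.1 * e 2 ^ p.2.2 := by
  refine ⟨Module.Basis.mk ColorH.mon_li (by rw [← ColorH.S_top, ColorH.S]), fun p => ?_⟩
  rw [Module.Basis.mk_apply]
  rfl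
end

section
/- Let R be the quotient of ℂ⟨e1,e2,e3⟩ by the two-sided ideal generated by e1e2 − e2e1, e1e3 − e3e1, e2e3 + e3e2, and 2e3² − e1. Then h_0 = 1, h_1 = 2, h_2 = 1, and h_n = 0 for all n ≥ 3. -/
open CategoryTheory FreeAlgebra

/-- `Ext^m_R(ℂ,ℂ)` as a ℂ-module, where `ℂ` is an `R`-module via the augmentation `ε`. -/
noncomputable def extC (R : Type) [Ring R] [Algebra ℂ R] (ε : R →ₐ[ℂ] ℂ) (m : ℕ) :
    ModuleCat ℂ :=
  letI : Module R ℂ := Module.compHom ℂ ε.toRingHom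
  ((Ext ℂ (ModuleCat R) m).obj (Opposite.op (ModuleCat.of R ℂ))).obj (ModuleCat.of R ℂ)

/-- `h_m = dim_ℂ Ext^m_R(ℂ,ℂ)`. -/
noncomputable def extDim (R : Type) [Ring R] [Algebra ℂ R] (ε : R →ₐ[ℂ] ℂ) (m : ℕ) : ℕ :=
  Module.finrank ℂ (extC R ε m)

/-- Relations: `e1e2 - e2e1 = 0`, `e1e3 - e3e1 = 0`, `e2e3 + e3e2 = 0`, `2e3² = e1`. -/
inductive CRel : FreeAlgebra ℂ (Fin 3) → FreeAlgebra ℂ (Fin 3) → Prop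
  | r12 : CRel (ι ℂ 0 * ι ℂ 1 - ι ℂ 1 * ι ℂ 0) 0
  | r13 : CRel (ι ℂ 0 * ι ℂ 2 - ι ℂ 2 * ι ℂ 0) 0
  | r23 : CRel (ι ℂ 1 * ι ℂ 2 + ι ℂ 2 * ι ℂ 1) 0
  | r33 : CRel ((2 : ℂ) • (ι ℂ 2 * ι ℂ 2)) (ι ℂ 0)

namespace Betti

noncomputable section

abbrev A : Type := RingQuot CRel

def x : A := RingQuot.mkAlgHom ℂ CRel (ι ℂ 1)
def y : A := RingQuot.mkAlgHom ℂ CRel (ι ℂ 2)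
def z : A := RingQuot.mkAlgHom ℂ CRel (ι ℂ 0)

lemma hyx : y * x = -(x * y) := by
  have := RingQuot.mkAlgHom_rel ℂ CRel.r23
  simp only [map_add, map_mul, map_zero] at this
  rw [← x, ← y] at this
  exact eq_neg_of_add_eq_zero_right this

lemma hz : z = (2 : ℂ) • (y * y) := by
  have := RingQuot.mkAlgHom_rel ℂ CRel.r33
  simp only [map_smul, map_mul] at this
  rw [← y, ← z] at this
  exact this.symm

/-- monomial basis -/
def m (p : ℕ × ℕ) : A := x ^ p.1 * y ^ p.2

lemma m_zero : m (0, 0) = 1 := by simp [m]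

lemma ypow_x (j : ℕ) : y ^ j * x = ((-1 : ℂ) ^ j) • (x * y ^ j) := by
  induction j with
  | zero => simp
  | succ j ih =>
    calc y ^ (j + 1) * x = y ^ j * (y * x) := by rw [pow_succ, mul_assoc]
      _ = -(y ^ j * x * y) := by rw [hyx]; exact (mul_neg (y ^ j) (x * y)).trans (by rw [mul_assoc])
      _ = -((((-1 : ℂ) ^ j) • (x * y ^ j)) * y) := by rw [ih]
      _ = ((-1 : ℂ) ^ (j + 1)) • (x * y ^ (j + 1)) := by
          rw [smul_mul_assoc, pow_succ, pow_succ, mul_assoc]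
          module

lemma m_mul_y (i j : ℕ) : m (i, j) * y = m (i, j + 1) := by
  simp [m, pow_succ, mul_assoc]

lemma m_mul_x (i j : ℕ) : m (i, j) * x = ((-1 : ℂ) ^ j) • m (i + 1, j) := by
  calc m (i, j) * x = x ^ i * (y ^ j * x) := by rw [m, mul_assoc]
    _ = x ^ i * (((-1 : ℂ) ^ j) • (x * y ^ j)) := by rw [ypow_x]
    _ = ((-1 : ℂ) ^ j) • (x ^ (i + 1) * y ^ j) := by
        rw [mul_smul_comm, pow_succ, mul_assoc]

abbrev F : Type := (ℕ × ℕ) →₀ ℂ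

def ψ : F →ₗ[ℂ] A := Finsupp.linearCombination ℂ m

@[simp] lemma ψ_single (p : ℕ × ℕ) (c : ℂ) : ψ (Finsupp.single p c) = c • m p := by
  simp [ψ]

/-- right multiplication operators on the coefficient space -/
def Xop : F →ₗ[ℂ] F :=
  Finsupp.linearCombination ℂ (fun p => ((-1 : ℂ) ^ p.2) • Finsupp.single (p.1 + 1, p.2) 1)

def Yop : F →ₗ[ℂ] F :=
  Finsupp.linearCombination ℂ (fun p => Finsupp.single (p.1, p.2 + 1) 1)

@[simp] lemma Xop_single (p : ℕ × ℕ) (c : ℂ) :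
    Xop (Finsupp.single p c) = ((-1 : ℂ) ^ p.2) • Finsupp.single (p.1 + 1, p.2) c := by
  simp [Xop, Finsupp.smul_single, smul_smul, mul_comm]

@[simp] lemma Yop_single (p : ℕ × ℕ) (c : ℂ) :
    Yop (Finsupp.single p c) = Finsupp.single (p.1, p.2 + 1) c := by
  simp [Yop, Finsupp.smul_single]

section Rep

/-- the free-algebra representation on `F` -/
def ρ₀ : FreeAlgebra ℂ (Fin 3) →ₐ[ℂ] Module.End ℂ F :=
  FreeAlgebra.lift ℂ ![(2 : ℂ) • (Yop * Yop), Xop, Yop]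

lemma XYop : Xop * Yop = -(Yop * Xop) := by
  apply Finsupp.lhom_ext
  intro p c
  cases p with
  | mk i j =>
    show Xop (Yop _) = -(Yop (Xop _))
    rw [Yop_single, Xop_single, Xop_single, map_smul, Yop_single, pow_succ]
    module

lemma YYXop : Xop * (Yop * Yop) = Yop * Yop * Xop := by
  apply Finsupp.lhom_ext
  intro p c
  obtain ⟨i, j⟩ := p
  show Xop (Yop (Yop _)) = Yop (Yop (Xop _))
  simp only [Yop_single, Xop_single, map_smul]
  norm_num [pow_succ]

lemma ρ₀_rel : ∀ ⦃a b⦄, CRel a b → ρ₀ a = ρ₀ b := by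
  intro a b h
  induction h with
  | r12 =>
    simp only [map_sub, map_mul, map_zero, ρ₀, FreeAlgebra.lift_ι_apply,
      Matrix.cons_val_zero, Matrix.cons_val_one, Matrix.head_cons]
    rw [sub_eq_zero, smul_mul_assoc, mul_smul_comm, YYXop]
  | r13 =>
    simp only [map_sub, map_mul, map_zero, ρ₀, FreeAlgebra.lift_ι_apply,
      Matrix.cons_val_zero, Matrix.cons_val_two, Matrix.tail_cons, Matrix.head_cons]
    rw [sub_eq_zero, smul_mul_assoc, mul_smul_comm, mul_assoc]
  | r23 =>
    simp only [map_add, map_mul, map_zero, ρ₀, FreeAlgebra.lift_ι_apply,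
      Matrix.cons_val_one, Matrix.cons_val_two, Matrix.tail_cons, Matrix.head_cons,
      Matrix.cons_val_zero]
    rw [XYop]
    exact neg_add_cancel (Yop * Xop)
  | r33 =>
    simp only [map_smul, map_mul, ρ₀, FreeAlgebra.lift_ι_apply]
    rfl

def ρ : A →ₐ[ℂ] Module.End ℂ F := RingQuot.liftAlgHom ℂ ⟨ρ₀, ρ₀_rel⟩

lemma ρ_x : ρ x = Xop := by
  rw [x, ρ, RingQuot.liftAlgHom_mkAlgHom_apply, ρ₀, FreeAlgebra.lift_ι_apply]
  rfl

lemma ρ_y : ρ y = Yop := by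
  rw [y, ρ, RingQuot.liftAlgHom_mkAlgHom_apply, ρ₀, FreeAlgebra.lift_ι_apply]
  rfl

lemma Yop_pow (j a b : ℕ) (c : ℂ) :
    (Yop ^ j) (Finsupp.single (a, b) c) = Finsupp.single (a, b + j) c := by
  induction j with
  | zero => simp
  | succ j ih =>
    rw [pow_succ', Module.End.mul_apply, ih, Yop_single]
    rfl

lemma Xop_pow (i a b : ℕ) (c : ℂ) :
    (Xop ^ i) (Finsupp.single (a, b) c)
      = ((-1 : ℂ) ^ (i * b)) • Finsupp.single (a + i, b) c := by
  induction i with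
  | zero => simp
  | succ i ih =>
    rw [pow_succ', Module.End.mul_apply, ih, map_smul, Xop_single]
    dsimp only
    rw [smul_smul, ← pow_add]
    rw [show i * b + b = (i + 1) * b by ring]
    congr 2

lemma ρ_m (p : ℕ × ℕ) :
    (ρ (m p)) (Finsupp.single (0, 0) 1)
      = ((-1 : ℂ) ^ (p.1 * p.2)) • Finsupp.single p 1 := by
  obtain ⟨i, j⟩ := p
  rw [m, map_mul, map_pow, map_pow, ρ_x, ρ_y, Module.End.mul_apply, Yop_pow, Xop_pow]
  norm_num

/-- sign operator -/
def σop : F →ₗ[ℂ] F :=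
  Finsupp.linearCombination ℂ (fun p : ℕ × ℕ => ((-1 : ℂ) ^ (p.1 * p.2)) • Finsupp.single p 1)

lemma σop_single (p : ℕ × ℕ) (c : ℂ) :
    σop (Finsupp.single p c) = ((-1 : ℂ) ^ (p.1 * p.2)) • Finsupp.single p c := by
  simp [σop, Finsupp.smul_single, smul_smul, mul_comm]

lemma eval_eq :
    (LinearMap.applyₗ (Finsupp.single ((0 : ℕ), (0 : ℕ)) (1 : ℂ))).comp
      ((ρ.toLinearMap).comp ψ) = σop := by
  apply Finsupp.lhom_ext
  intro p c
  show (ρ (ψ (Finsupp.single p c))) (Finsupp.single (0, 0) 1) = σop (Finsupp.single p c)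
  rw [ψ_single, σop_single, map_smul, LinearMap.smul_apply, ρ_m]
  simp [Finsupp.smul_single, smul_smul, mul_comm]

lemma σop_coeff (w : F) (q : ℕ × ℕ) : (σop w) q = ((-1 : ℂ) ^ (q.1 * q.2)) * w q := by
  induction w using Finsupp.induction_linear with
  | zero => simp
  | add u v hu hv => rw [map_add, Finsupp.add_apply, hu, hv, Finsupp.add_apply]; ring
  | single p c =>
    rw [σop_single]
    rcases eq_or_ne p q with rfl | hpq
    · simp
    · simp [Finsupp.single_apply_eq_zero, hpq]

lemma ψ_inj : Function.Injective ψ := by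
  intro u v h
  have h2 : σop u = σop v := by
    rw [← eval_eq]
    simp only [LinearMap.comp_apply, h]
  ext q
  have := congrArg (fun w : F => w q) h2
  simp only [σop_coeff] at this
  have hne : ((-1 : ℂ) ^ (q.1 * q.2)) ≠ 0 := by
    apply pow_ne_zero; norm_num
  exact mul_left_cancel₀ hne this

lemma ψ_Xop (u : F) : ψ (Xop u) = ψ u * x := by
  have : ψ.comp Xop = (LinearMap.mulRight ℂ x).comp ψ := by
    apply Finsupp.lhom_ext
    intro p c
    obtain ⟨i, j⟩ := p
    simp only [LinearMap.comp_apply, Xop_single, map_smul, ψ_single,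
      LinearMap.mulRight_apply, smul_mul_assoc]
    rw [m_mul_x, smul_smul, smul_smul, mul_comm]
  exact DFunLike.congr_fun this u

lemma ψ_Yop (u : F) : ψ (Yop u) = ψ u * y := by
  have : ψ.comp Yop = (LinearMap.mulRight ℂ y).comp ψ := by
    apply Finsupp.lhom_ext
    intro p c
    obtain ⟨i, j⟩ := p
    simp only [LinearMap.comp_apply, Yop_single, ψ_single,
      LinearMap.mulRight_apply, smul_mul_assoc]
    rw [m_mul_y]
  exact DFunLike.congr_fun this u

/-- the range of ψ -/
def S : Submodule ℂ A := LinearMap.range ψ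

lemma one_mem_S : (1 : A) ∈ S := ⟨Finsupp.single (0, 0) 1, by simp [m]⟩

lemma mul_x_mem_S {r : A} (hr : r ∈ S) : r * x ∈ S := by
  obtain ⟨u, rfl⟩ := hr
  exact ⟨Xop u, ψ_Xop u⟩

lemma mul_y_mem_S {r : A} (hr : r ∈ S) : r * y ∈ S := by
  obtain ⟨u, rfl⟩ := hr
  exact ⟨Yop u, ψ_Yop u⟩

lemma mul_mk_mem_S (a : FreeAlgebra ℂ (Fin 3)) :
    ∀ r ∈ S, r * (RingQuot.mkAlgHom ℂ CRel a) ∈ S := by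
  induction a using FreeAlgebra.induction with
  | grade0 c =>
    intro r hr
    rw [AlgHom.commutes]
    have : r * algebraMap ℂ A c = c • r := by
      rw [Algebra.smul_def, ← Algebra.commutes]
    rw [this]
    exact S.smul_mem c hr
  | grade1 i =>
    intro r hr
    fin_cases i
    · show r * z ∈ S
      rw [hz, mul_smul_comm, ← mul_assoc]
      exact S.smul_mem _ (mul_y_mem_S (mul_y_mem_S hr))
    · exact mul_x_mem_S hr
    · exact mul_y_mem_S hr
  | mul a b ha hb =>
    intro r hr
    rw [map_mul, ← mul_assoc]
    exact hb _ (ha _ hr)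
  | add a b ha hb =>
    intro r hr
    rw [map_add, left_distrib]
    exact S.add_mem (ha _ hr) (hb _ hr)

lemma ψ_surj : Function.Surjective ψ := by
  intro r
  obtain ⟨a, rfl⟩ := RingQuot.mkAlgHom_surjective ℂ CRel r
  have : RingQuot.mkAlgHom ℂ CRel a ∈ S := by
    have := mul_mk_mem_S a 1 one_mem_S
    rwa [one_mul] at this
  exact this

/-- the PBW linear equivalence -/
def e : F ≃ₗ[ℂ] A := LinearEquiv.ofBijective ψ ⟨ψ_inj, ψ_surj⟩

section Coeffs

lemma Yop_coeff_succ (u : F) (i j : ℕ) : (Yop u) (i, j + 1) = u (i, j) := by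
  induction u using Finsupp.induction_linear with
  | zero => simp
  | add u v hu hv => simp [Finsupp.add_apply, hu, hv]
  | single p c =>
    obtain ⟨a, b⟩ := p
    rw [Yop_single]
    dsimp only
    rcases eq_or_ne ((a, b) : ℕ × ℕ) (i, j) with h | h
    · obtain ⟨rfl, rfl⟩ : a = i ∧ b = j := by simpa [Prod.ext_iff] using h
      simp
    · have h2 : ((a, b + 1) : ℕ × ℕ) ≠ (i, j + 1) := by
        simp only [ne_eq, Prod.mk.injEq] at h ⊢
        omega
      rw [Finsupp.single_eq_of_ne' h2, Finsupp.single_eq_of_ne' h]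

lemma Yop_coeff_zero (u : F) (i : ℕ) : (Yop u) (i, 0) = 0 := by
  induction u using Finsupp.induction_linear with
  | zero => simp
  | add u v hu hv => simp [Finsupp.add_apply, hu, hv]
  | single p c =>
    obtain ⟨a, b⟩ := p
    rw [Yop_single]
    dsimp only
    have h2 : ((a, b + 1) : ℕ × ℕ) ≠ (i, 0) := by
      simp only [ne_eq, Prod.mk.injEq]
      omega
    rw [Finsupp.single_eq_of_ne' h2]

lemma Xop_coeff_succ (u : F) (i j : ℕ) : (Xop u) (i + 1, j) = (-1 : ℂ) ^ j * u (i, j) := by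
  induction u using Finsupp.induction_linear with
  | zero => simp
  | add u v hu hv => simp [Finsupp.add_apply, hu, hv]; ring
  | single p c =>
    obtain ⟨a, b⟩ := p
    rw [Xop_single]
    dsimp only
    rw [Finsupp.smul_apply]
    rcases eq_or_ne ((a, b) : ℕ × ℕ) (i, j) with h | h
    · obtain ⟨rfl, rfl⟩ : a = i ∧ b = j := by simpa [Prod.ext_iff] using h
      simp
    · have h2 : ((a + 1, b) : ℕ × ℕ) ≠ (i + 1, j) := by
        simp only [ne_eq, Prod.mk.injEq] at h ⊢
        omega
      rw [Finsupp.single_eq_of_ne' h2, Finsupp.single_eq_of_ne' h]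
      simp

lemma Xop_coeff_zero (u : F) (j : ℕ) : (Xop u) (0, j) = 0 := by
  induction u using Finsupp.induction_linear with
  | zero => simp
  | add u v hu hv => simp [Finsupp.add_apply, hu, hv]
  | single p c =>
    obtain ⟨a, b⟩ := p
    rw [Xop_single]
    dsimp only
    rw [Finsupp.smul_apply]
    have h2 : ((a + 1, b) : ℕ × ℕ) ≠ (0, j) := by
      simp only [ne_eq, Prod.mk.injEq]
      omega
    rw [Finsupp.single_eq_of_ne' h2]
    simp

end Coeffs

section Exactness

/-- key exactness statement 2: right multiplication by `y` is injective -/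
lemma S2 {c : A} (h : c * y = 0) : c = 0 := by
  obtain ⟨u, rfl⟩ := ψ_surj c
  rw [← ψ_Yop] at h
  have h0 : Yop u = 0 := ψ_inj (by rw [h, map_zero])
  have hu : u = 0 := by
    ext q
    obtain ⟨i, j⟩ := q
    rw [← Yop_coeff_succ u i j, h0]
    simp
  rw [hu, map_zero]

/-- key exactness statement 1: the Koszul relation kernel -/
lemma S1 {a b : A} (h : a * x + b * y = 0) : ∃ c, c * y = a ∧ c * x = b := by
  obtain ⟨u, rfl⟩ := ψ_surj a
  obtain ⟨v, rfl⟩ := ψ_surj b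
  have h0 : Xop u + Yop v = 0 := by
    apply ψ_inj
    rw [map_add, ψ_Xop, ψ_Yop, h, map_zero]
  have hq : ∀ q : ℕ × ℕ, (Xop u) q + (Yop v) q = 0 := by
    intro q
    rw [← Finsupp.add_apply, h0, Finsupp.zero_apply]
  have hinj : Function.Injective (fun p : ℕ × ℕ => ((p.1, p.2 + 1) : ℕ × ℕ)) := by
    intro p q hpq
    simp only [Prod.mk.injEq] at hpq
    exact Prod.ext hpq.1 (by omega)
  set w : F := Finsupp.comapDomain (fun p : ℕ × ℕ => ((p.1, p.2 + 1) : ℕ × ℕ)) u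
    (hinj.injOn) with hw
  have hwc : ∀ i j : ℕ, w (i, j) = u (i, j + 1) := fun i j => rfl
  refine ⟨ψ w, ?_, ?_⟩
  · rw [← ψ_Yop]
    congr 1
    ext q
    obtain ⟨i, j⟩ := q
    cases j with
    | zero =>
      rw [Yop_coeff_zero]
      have := hq (i + 1, 0)
      rw [Xop_coeff_succ, Yop_coeff_zero] at this
      simp only [pow_zero, one_mul, add_zero] at this
      rw [this]
    | succ j =>
      rw [Yop_coeff_succ, hwc]
  · rw [← ψ_Xop]
    congr 1
    ext q
    obtain ⟨i, j⟩ := q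
    cases i with
    | zero =>
      rw [Xop_coeff_zero]
      have := hq (0, j + 1)
      rw [Xop_coeff_zero, Yop_coeff_succ, zero_add] at this
      rw [this]
    | succ i =>
      rw [Xop_coeff_succ, hwc]
      have := hq (i + 1, j + 1)
      rw [Xop_coeff_succ, Yop_coeff_succ, pow_succ] at this
      linear_combination -this

end Exactness

section Aug

variable (ε : A →ₐ[ℂ] ℂ) (hx : ε x = 0) (hy : ε y = 0)

include hx hy in
lemma ε_m (p : ℕ × ℕ) (hp : p ≠ 0) : ε (m p) = 0 := by
  obtain ⟨i, j⟩ := p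
  rw [m, map_mul, map_pow, map_pow, hx, hy]
  rcases Nat.eq_zero_or_pos i with rfl | hi
  · have hj : j ≠ 0 := by
      intro hj
      exact hp (by simp [hj, Prod.ext_iff])
    rw [zero_pow hj, mul_zero]
  · rw [zero_pow (by omega), zero_mul]

include hx hy in
lemma ε_ψ (u : F) : ε (ψ u) = u 0 := by
  rw [ψ, Finsupp.linearCombination_apply, map_finsuppSum]
  rw [Finsupp.sum_eq_single (0 : ℕ × ℕ)]
  · rw [map_smul, smul_eq_mul, show m 0 = 1 from by simp [m], map_one, mul_one]
  · intro p _ hp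
    rw [map_smul, smul_eq_mul, ε_m ε hx hy p hp, mul_zero]
  · simp

include hx hy in
/-- key exactness statement 0: the augmentation ideal is generated by x and y -/
lemma S0 {r : A} (h : ε r = 0) : ∃ a b, a * x + b * y = r := by
  obtain ⟨u, rfl⟩ := ψ_surj r
  have hu0 : u 0 = 0 := by rw [← ε_ψ ε hx hy u, h]
  set M : Submodule ℂ A :=
    LinearMap.range (LinearMap.mulRight ℂ x) ⊔ LinearMap.range (LinearMap.mulRight ℂ y) with hM
  have hmem : ψ u ∈ M := by
    rw [ψ, Finsupp.linearCombination_apply]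
    apply Submodule.sum_mem
    intro p hp
    have hpne : p ≠ 0 := by
      rintro rfl
      rw [Finsupp.mem_support_iff] at hp
      exact hp hu0
    apply Submodule.smul_mem
    obtain ⟨i, j⟩ := p
    cases j with
    | succ j =>
      apply Submodule.mem_sup_right
      exact ⟨m (i, j), m_mul_y i j⟩
    | zero =>
      cases i with
      | zero => exact absurd (by simp [Prod.ext_iff]) hpne
      | succ i =>
        apply Submodule.mem_sup_left
        refine ⟨m (i, 0), ?_⟩
        rw [LinearMap.mulRight_apply, m_mul_x]
        simp
  rw [hM, Submodule.mem_sup] at hmem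
  obtain ⟨r1, ⟨a, ha⟩, r2, ⟨b, hb⟩, hab⟩ := hmem
  exact ⟨a, b, by rw [← ha, ← hb] at hab; exact hab⟩

end Aug

section Resolution

variable (ε : A →ₐ[ℂ] ℂ)

/-- ℂ as an `A`-module via `ε` -/
def Cmod : ModuleCat A :=
  letI : Module A ℂ := Module.compHom ℂ ε.toRingHom
  ModuleCat.of A ℂ

abbrev M0 : ModuleCat A := ModuleCat.of A A
abbrev M1 : ModuleCat A := ModuleCat.of A (A × A)
abbrev Z0 : ModuleCat A := ModuleCat.of A PUnit

def d1 : M1 ⟶ M0 :=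
  ModuleCat.ofHom (LinearMap.coprod (LinearMap.toSpanSingleton A A x) (LinearMap.toSpanSingleton A A y))

def d2 : M0 ⟶ M1 :=
  ModuleCat.ofHom (LinearMap.prod (LinearMap.toSpanSingleton A A y) (LinearMap.toSpanSingleton A A x))

lemma d1_apply (a b : A) : d1 (a, b) = a * x + b * y := rfl
lemma d1_apply' (v : A × A) : d1 v = v.1 * x + v.2 * y := rfl
lemma d2_apply (c : A) : d2 c = (c * y, c * x) := rfl

lemma d21' (c : A) : d1 (d2 c) = 0 := by
  rw [d2_apply, d1_apply]
  have : c * y * x + c * x * y = c * (y * x + x * y) := by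
    rw [mul_add, mul_assoc, mul_assoc]
  rw [this, hyx, neg_add_cancel, mul_zero]

lemma d21 : d2 ≫ d1 = 0 := by
  apply ModuleCat.hom_ext
  apply LinearMap.ext
  intro c
  exact d21' c

abbrev Xs : ℕ → ModuleCat A
  | 0 => M0
  | 1 => M1
  | 2 => M0
  | _ + 3 => Z0

def ds : ∀ n, Xs (n + 1) ⟶ Xs n
  | 0 => d1
  | 1 => d2
  | _ + 2 => 0

/-- the Koszul-type resolution complex -/
def Kom : ChainComplex (ModuleCat A) ℕ :=
  ChainComplex.of Xs ds (by
    rintro (_ | _ | n)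
    · exact d21
    · show (0 : Xs 3 ⟶ Xs 2) ≫ d2 = 0
      simp
    · show (0 : Xs (n + 4) ⟶ Xs (n + 3)) ≫ 0 = 0
      simp)

lemma Kom_d10 : Kom.d 1 0 = d1 := ChainComplex.of_d Xs ds 0
lemma Kom_d21 : Kom.d 2 1 = d2 := ChainComplex.of_d Xs ds 1
lemma Kom_d_succ (n : ℕ) : Kom.d (n + 3) (n + 2) = 0 := ChainComplex.of_d _ _ (n + 2)

/-- the augmentation as an `A`-linear map -/
def εlin : M0 ⟶ Cmod ε :=
  letI : Module A ℂ := Module.compHom ℂ ε.toRingHom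
  ModuleCat.ofHom (Y := ℂ)
  { toFun := ε
    map_add' := map_add ε
    map_smul' := fun r s => map_mul ε r s }

lemma εlin_apply (r : A) : εlin ε r = ε r := rfl

lemma d_εlin (hx : ε x = 0) (hy : ε y = 0) : Kom.d 1 0 ≫ εlin ε = 0 := by
  rw [Kom_d10]
  ext ab
  show ε (d1 ab) = 0
  obtain ⟨a, b⟩ := ab
  rw [d1_apply, map_add, map_mul, map_mul, hx, hy, mul_zero, mul_zero, add_zero]

/-- the chain map to the single complex -/
def πmap (hx : ε x = 0) (hy : ε y = 0) : Kom ⟶ (ChainComplex.single₀ (ModuleCat A)).obj (Cmod ε) :=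
  (Kom.toSingle₀Equiv (Cmod ε)).symm ⟨εlin ε, d_εlin ε hx hy⟩

lemma πmap_f_zero (hx : ε x = 0) (hy : ε y = 0) : (πmap ε hx hy).f 0 = εlin ε :=
  ChainComplex.toSingle₀Equiv_symm_apply_f_zero _ _

lemma Kom_projective (n : ℕ) : CategoryTheory.Projective (Kom.X n) := by
  have b0 : Module.Basis Unit A A := Module.Basis.singleton Unit A
  have hM0 : CategoryTheory.Projective M0 := ModuleCat.projective_of_free b0
  have hM1 : CategoryTheory.Projective M1 := ModuleCat.projective_of_free (b0.prod b0)
  have hZ0 : CategoryTheory.Projective Z0 := by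
    apply CategoryTheory.Limits.IsZero.projective
    exact ModuleCat.isZero_of_subsingleton _
  show CategoryTheory.Projective (Xs n)
  match n with
  | 0 => exact hM0
  | 1 => exact hM1
  | 2 => exact hM0
  | (n + 3) => exact hZ0

lemma Kom_exactAt_one : Kom.ExactAt 1 := by
  rw [HomologicalComplex.exactAt_iff' Kom 2 1 0 (by simp) (by simp)]
  rw [ShortComplex.moduleCat_exact_iff]
  intro ab hab
  have hab' : d1 (ab : A × A) = 0 := by
    rw [← Kom_d10]
    exact hab
  replace hab' := (d1_apply' _).symm.trans hab'
  obtain ⟨c, hc1, hc2⟩ := S1 hab'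
  refine ⟨c, ?_⟩
  have key : d2 (c : A) = (ab : A × A) := by
    rw [d2_apply, hc1, hc2]
    exact Prod.mk.eta
  show Kom.d 2 1 c = ab
  rw [Kom_d21]
  exact key

lemma Kom_exactAt_two : Kom.ExactAt 2 := by
  rw [HomologicalComplex.exactAt_iff' Kom 3 2 1 (by simp) (by simp)]
  rw [ShortComplex.moduleCat_exact_iff]
  intro c hc
  have hc' : d2 (show A from c) = 0 := by
    rw [← Kom_d21]
    exact hc
  have hcy : (show A from c) * y = 0 := congrArg Prod.fst hc'
  have hc0 : (show A from c) = (0 : A) := S2 hcy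
  refine ⟨0, ?_⟩
  show Kom.d 3 2 0 = c
  rw [Kom_d_succ 0]
  exact (map_zero _).trans hc0.symm

lemma Kom_exactAt_succ (n : ℕ) : Kom.ExactAt (n + 1) := by
  match n with
  | 0 => exact Kom_exactAt_one
  | 1 => exact Kom_exactAt_two
  | (k + 2) =>
    rw [HomologicalComplex.exactAt_iff]
    apply ShortComplex.exact_of_isZero_X₂
    show CategoryTheory.Limits.IsZero (Xs (k + 3))
    exact ModuleCat.isZero_of_subsingleton _

lemma πmap_quasiIso (hx : ε x = 0) (hy : ε y = 0) : QuasiIso (πmap ε hx hy) := by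
  rw [quasiIso_iff]
  intro n
  cases n with
  | succ n =>
    rw [quasiIsoAt_iff_exactAt' (πmap ε hx hy) (n + 1)
      (ChainComplex.exactAt_succ_single_obj _ _)]
    exact Kom_exactAt_succ n
  | zero =>
    rw [quasiIsoAt_iff' _ 1 0 0 (by simp) (by simp)]
    refine (ShortComplex.quasiIso_iff_of_zeros'
      ((HomologicalComplex.shortComplexFunctor' (ModuleCat A) (ComplexShape.down ℕ) 1 0 0).map
        (πmap ε hx hy)) ?hg1 ?hf2 ?hg2).2 ?main
    case hg1 =>
      show Kom.d 0 0 = 0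
      exact Kom.shape 0 0 (by simp)
    case hf2 =>
      show ((ChainComplex.single₀ (ModuleCat A)).obj (Cmod ε)).d 1 0 = 0
      apply CategoryTheory.Limits.IsZero.eq_zero_of_src
      exact HomologicalComplex.isZero_single_obj_X (ComplexShape.down ℕ) 0 _ 1 (by simp)
    case hg2 =>
      show ((ChainComplex.single₀ (ModuleCat A)).obj (Cmod ε)).d 0 0 = 0
      exact HomologicalComplex.shape _ 0 0 (by simp)
    constructor
    · rw [ShortComplex.moduleCat_exact_iff]
      intro (v : A) hv
      have hεv : ε v = 0 := by
        have : εlin ε v = 0 := by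
          rw [← πmap_f_zero ε hx hy]
          exact hv
        exact this
      obtain ⟨a, b, hab⟩ := S0 ε hx hy hεv
      refine ⟨(a, b), ?_⟩
      have key : d1 ((a : A), (b : A)) = (v : A) := by rw [d1_apply, hab]
      show Kom.d 1 0 (a, b) = v
      rw [Kom_d10]
      exact key
    · rw [ModuleCat.epi_iff_surjective]
      intro c
      refine ⟨algebraMap ℂ A c, ?_⟩
      show (πmap ε hx hy).f 0 (algebraMap ℂ A c) = c
      rw [πmap_f_zero]
      show ε (algebraMap ℂ A c) = c
      exact ε.commutes _

/-- the projective resolution -/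
def P (hx : ε x = 0) (hy : ε y = 0) : CategoryTheory.ProjectiveResolution (Cmod ε) where
  complex := Kom
  projective := Kom_projective
  π := πmap ε hx hy
  quasiIso := πmap_quasiIso ε hx hy

end Resolution

section Dim

variable (ε : A →ₐ[ℂ] ℂ)

/-- the Hom cochain complex -/
def L : CochainComplex (ModuleCat ℂ) ℕ := Kom.linearYonedaObj ℂ (Cmod ε)

lemma hom0_eq (f : M0 ⟶ Cmod ε) (r : A) :
    (show ℂ from f r) = ε r * (show ℂ from f (1 : A)) := by
  calc (show ℂ from f r) = (show ℂ from f ((r • (1 : A) : A))) := by rw [smul_eq_mul, mul_one]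
    _ = ε r * (show ℂ from f (1 : A)) := map_smul f.hom r (1 : A)

lemma hom1_eq (f : M1 ⟶ Cmod ε) (v : A × A) :
    (show ℂ from f v) = ε v.1 * (show ℂ from f ((1 : A), (0 : A)))
      + ε v.2 * (show ℂ from f ((0 : A), (1 : A))) := by
  have hv : v = v.1 • ((1 : A), (0 : A)) + v.2 • ((0 : A), (1 : A)) := by
    apply Prod.ext
    · show v.1 = v.1 * 1 + v.2 * 0
      rw [mul_one, mul_zero, add_zero]
    · show v.2 = v.1 * 0 + v.2 * 1
      rw [mul_one, mul_zero, zero_add]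
  calc (show ℂ from f v)
      = (show ℂ from f ((v.1 • ((1 : A), (0 : A)) + v.2 • ((0 : A), (1 : A)) : A × A))) := by
        rw [← hv]
    _ = _ := by rw [map_add, map_smul, map_smul]; rfl

lemma Ld_zero (hx : ε x = 0) (hy : ε y = 0) (i j : ℕ) : (L ε).d i j = 0 := by
  rcases eq_or_ne (i + 1) j with rfl | hij
  · rw [L, ChainComplex.linearYonedaObj_d]
    apply ModuleCat.hom_ext
    apply LinearMap.ext
    intro f
    show Kom.d (i + 1) i ≫ (show Kom.X i ⟶ Cmod ε from f) = 0
    match i, f with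
    | 0, f =>
      rw [Kom_d10]
      apply ModuleCat.hom_ext
      apply LinearMap.ext
      intro v
      have key : ∀ w : A × A, (show ℂ from (show M0 ⟶ Cmod ε from f) (d1 w)) = 0 := by
        intro w
        rw [d1_apply', hom0_eq ε, map_add, map_mul, map_mul, hx, hy, mul_zero, mul_zero,
          add_zero, zero_mul]
      exact key (show A × A from v)
    | 1, f =>
      rw [Kom_d21]
      apply ModuleCat.hom_ext
      apply LinearMap.ext
      intro c
      have key : ∀ w : A, (show ℂ from (show M1 ⟶ Cmod ε from f) (d2 w)) = 0 := by
        intro w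
        rw [d2_apply, hom1_eq ε]
        show ε (w * y) * _ + ε (w * x) * _ = 0
        rw [map_mul, map_mul, hx, hy]
        show ε w * 0 * (_ : ℂ) + ε w * 0 * (_ : ℂ) = 0
        rw [mul_zero, zero_mul, zero_mul, add_zero]
      exact key (show A from c)
    | (n + 2), f =>
      rw [Kom_d_succ n, Limits.zero_comp]
  · exact (L ε).shape i j (by simpa using hij)

/-- homology of the Hom complex is the Hom complex itself -/
def Liso (hx : ε x = 0) (hy : ε y = 0) (n : ℕ) : (L ε).homology n ≅ (L ε).X n :=
  (ShortComplex.LeftHomologyData.ofZeros ((L ε).sc n)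
    (Ld_zero ε hx hy _ n) (Ld_zero ε hx hy n _)).homologyIso

def e0 : (M0 ⟶ Cmod ε) ≃ₗ[ℂ] ℂ where
  toFun f := show ℂ from f (1 : A)
  map_add' f g := rfl
  map_smul' c f := by
    show ε (algebraMap ℂ A c) * (show ℂ from f (1 : A)) = c * (show ℂ from f (1 : A))
    rw [AlgHom.commutes]
    simp
  invFun c :=
    letI : Module A ℂ := Module.compHom ℂ ε.toRingHom
    ModuleCat.ofHom (Y := ℂ)
    { toFun := fun r => ε (show A from r) * c
      map_add' := fun r s => by
        show ε ((show A from r) + (show A from s)) * c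
          = ε (show A from r) * c + ε (show A from s) * c
        rw [map_add, add_mul]
      map_smul' := fun r s => by
        show ε (r * (show A from s)) * c = ε r * (ε (show A from s) * c)
        rw [map_mul, mul_assoc] }
  left_inv f := by
    apply ModuleCat.hom_ext
    letI : Module A ℂ := Module.compHom ℂ ε.toRingHom
    apply LinearMap.ext
    intro r
    exact (hom0_eq ε f (show A from r)).symm
  right_inv c := by
    show ε 1 * c = c
    rw [map_one, one_mul]

def e1 : (M1 ⟶ Cmod ε) ≃ₗ[ℂ] ℂ × ℂ where
  toFun f := (show ℂ from f ((1 : A), (0 : A)), show ℂ from f ((0 : A), (1 : A)))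
  map_add' f g := rfl
  map_smul' c f := by
    apply Prod.ext
    · show ε (algebraMap ℂ A c) * (show ℂ from f ((1 : A), (0 : A)))
        = c * (show ℂ from f ((1 : A), (0 : A)))
      rw [AlgHom.commutes]; simp
    · show ε (algebraMap ℂ A c) * (show ℂ from f ((0 : A), (1 : A)))
        = c * (show ℂ from f ((0 : A), (1 : A)))
      rw [AlgHom.commutes]; simp
  invFun p :=
    letI : Module A ℂ := Module.compHom ℂ ε.toRingHom
    ModuleCat.ofHom (Y := ℂ)
    { toFun := fun v => ε (show A × A from v).1 * p.1 + ε (show A × A from v).2 * p.2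
      map_add' := fun v w => by
        show ε ((show A × A from v).1 + (show A × A from w).1) * p.1
            + ε ((show A × A from v).2 + (show A × A from w).2) * p.2
          = (ε (show A × A from v).1 * p.1 + ε (show A × A from v).2 * p.2)
            + (ε (show A × A from w).1 * p.1 + ε (show A × A from w).2 * p.2)
        rw [map_add, map_add]
        ring
      map_smul' := fun r v => by
        show ε (r * (show A × A from v).1) * p.1 + ε (r * (show A × A from v).2) * p.2
          = ε r * (ε (show A × A from v).1 * p.1 + ε (show A × A from v).2 * p.2)
        rw [map_mul, map_mul]
        ring }
  left_inv f := by
    apply ModuleCat.hom_ext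
    letI : Module A ℂ := Module.compHom ℂ ε.toRingHom
    apply LinearMap.ext
    intro v
    exact (hom1_eq ε f (show A × A from v)).symm
  right_inv p := by
    apply Prod.ext
    · show ε 1 * p.1 + ε 0 * p.2 = p.1
      rw [map_one, map_zero]; ring
    · show ε 0 * p.1 + ε 1 * p.2 = p.2
      rw [map_one, map_zero]; ring

/-- the expected Betti numbers -/
def fn : ℕ → ℕ
  | 0 => 1
  | 1 => 2
  | 2 => 1
  | _ + 3 => 0

lemma finrank_LX (n : ℕ) : Module.finrank ℂ ((L ε).X n) = fn n := by
  match n with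
  | 0 =>
    show Module.finrank ℂ (M0 ⟶ Cmod ε) = 1
    rw [LinearEquiv.finrank_eq (e0 ε), Module.finrank_self]
  | 1 =>
    show Module.finrank ℂ (M1 ⟶ Cmod ε) = 2
    rw [LinearEquiv.finrank_eq (e1 ε), Module.finrank_prod, Module.finrank_self]
  | 2 =>
    show Module.finrank ℂ (M0 ⟶ Cmod ε) = 1
    rw [LinearEquiv.finrank_eq (e0 ε), Module.finrank_self]
  | (k + 3) =>
    show Module.finrank ℂ (Z0 ⟶ Cmod ε) = 0
    have : Subsingleton (Z0 ⟶ Cmod ε) := by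
      constructor
      intro f g
      apply ModuleCat.hom_ext
      apply LinearMap.ext
      intro v
      have key : ∀ w : PUnit, (show ℂ from f w) = (show ℂ from g w) := by
        intro w
        have hw : w = (0 : PUnit) := rfl
        rw [hw]
        calc (show ℂ from f (0 : PUnit)) = 0 := map_zero f.hom
          _ = (show ℂ from g (0 : PUnit)) := (map_zero g.hom).symm
      exact key (show PUnit from v)
    exact Module.finrank_zero_of_subsingleton

lemma finrank_Ext (hx : ε x = 0) (hy : ε y = 0) (n : ℕ) :
    Module.finrank ℂ (((Ext ℂ (ModuleCat A) n).obj (Opposite.op (Cmod ε))).obj (Cmod ε))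
      = fn n := by
  have iso : (((Ext ℂ (ModuleCat A) n).obj (Opposite.op (Cmod ε))).obj (Cmod ε)) ≅ (L ε).X n :=
    ((P ε hx hy).isoExt (R := ℂ) n (Cmod ε)) ≪≫ Liso ε hx hy n
  rw [LinearEquiv.finrank_eq iso.toLinearEquiv, finrank_LX]

end Dim

end Rep

end

end Betti


lemma Betti.fn_succ (k : ℕ) : Betti.fn (k + 3) = 0 := rfl

theorem betti_numbers (ε : RingQuot CRel →ₐ[ℂ] ℂ)
    (hε : ∀ i : Fin 3, ε (RingQuot.mkAlgHom ℂ CRel (ι ℂ i)) = 0) :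
    extDim (RingQuot CRel) ε 0 = 1 ∧ extDim (RingQuot CRel) ε 1 = 2 ∧
    extDim (RingQuot CRel) ε 2 = 1 ∧ ∀ n ≥ 3, extDim (RingQuot CRel) ε n = 0 := by
  have hx : ε Betti.x = 0 := hε 1
  have hy : ε Betti.y = 0 := hε 2
  have key : ∀ n, extDim (RingQuot CRel) ε n = Betti.fn n := by
    intro n
    show Module.finrank ℂ (extC (RingQuot CRel) ε n) = _
    exact Betti.finrank_Ext ε hx hy n
  refine ⟨key 0, key 1, key 2, ?_⟩
  intro n hn
  obtain ⟨k, rfl⟩ : ∃ k, n = k + 3 := ⟨n - 3, by omega⟩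
  rw [key (k + 3), Betti.fn_succ]
end
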